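/- Let D > 0 and H > 0 be real numbers, let ψ₀, ψ_H ∈ ℝ, and let ψ(s) = ψ₀ + (ψ_H − ψ₀)·s/H be the linear normalized potential on [0, H]. Suppose c : [0, H] → ℝ is differentiable and there exists a constant J ∈ ℝ such that the Nernst–Planck flux is constant, i.e. −D·(c'(s) + c(s)·ψ'(s)) = J for all s ∈ [0, H]. Then the flux is given exactly by the Scharfetter–Gummel formula: J = (D/H)·(Be(ψ_H − ψ₀)·c(0) − Be(−(ψ_H − ψ₀))·c(H)). -/

import Mathlib

/-!
With `x = ψH - ψ₀` and `k = x / H`, constant flux means `c' + k c = -J/D` on `[0, H]`, so the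
integrating factor gives `(c(s) e^{ks})' = -(J/D) e^{ks}`. Integrating over `[0, H]`, and using
`∫₀^H e^{ks} ds = H / Be x` together with `Be (-x) = Be x · e^x`, yields the formula.
-/

/-- The inverse Bernoulli function `Be(x) = x / (exp x - 1)`, with `Be 0 = 1`. -/
noncomputable def Be (x : ℝ) : ℝ := if x = 0 then 1 else x / (Real.exp x - 1)

open Real Set intervalIntegral

lemma exp_sub_one_ne_zero {x : ℝ} (hx : x ≠ 0) : exp x - 1 ≠ 0 :=
  sub_ne_zero.2 (mt (exp_eq_one_iff x).1 hx)

lemma Be_neg (x : ℝ) : Be (-x) = Be x * exp x := by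
  rcases eq_or_ne x 0 with rfl | hx
  · simp [Be]
  have h₁ := exp_sub_one_ne_zero hx
  have h₂ := exp_sub_one_ne_zero (neg_ne_zero.2 hx)
  simp only [Be, hx, neg_eq_zero, if_false]
  rw [div_mul_eq_mul_div, div_eq_div_iff h₂ h₁, exp_neg]
  field_simp
  ring

lemma Be_mul_integral_exp (x : ℝ) {H : ℝ} (hH : H ≠ 0) :
    Be x * ∫ s in (0)..H, exp (x / H * s) = H := by
  rcases eq_or_ne x 0 with rfl | hx
  · simp [Be]
  rw [integral_comp_mul_left (fun s => exp s) (div_ne_zero hx hH), integral_exp, mul_zero,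
    exp_zero, div_mul_cancel₀ x hH, smul_eq_mul, Be, if_neg hx, inv_div]
  field_simp [exp_sub_one_ne_zero hx]

theorem mul_exp_sub_mul_exp_of_deriv_add_mul_eq {c c' : ℝ → ℝ} {a b k r : ℝ} (hab : a ≤ b)
    (hc : ∀ s ∈ Icc a b, HasDerivAt c (c' s) s)
    (hode : ∀ s ∈ Icc a b, c' s + k * c s = r) :
    c b * exp (k * b) - c a * exp (k * a) = r * ∫ s in a..b, exp (k * s) := by
  rw [← integral_const_mul]
  refine (integral_eq_sub_of_hasDerivAt (f := fun s => c s * exp (k * s)) (fun s hs => ?_)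
    ((by fun_prop : Continuous fun s => r * exp (k * s)).intervalIntegrable _ _)).symm
  rw [uIcc_of_le hab] at hs
  have hexp : HasDerivAt (fun s => exp (k * s)) (exp (k * s) * k) s := by
    simpa using ((hasDerivAt_id s).const_mul k).exp
  exact ((hc s hs).mul hexp).congr_deriv (by rw [← hode s hs]; ring)

/-- If the Nernst–Planck flux of a differentiable concentration `c` in a linear
normalized potential `ψ` is constant equal to `J` on `[0, H]`, then `J` is given by
the Scharfetter–Gummel formula. -/
theorem scharfetter_gummel_flux
    (D H ψ₀ ψH J : ℝ) (hD : 0 < D) (hH : 0 < H)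
    (ψ : ℝ → ℝ) (hψ : ∀ s : ℝ, ψ s = ψ₀ + (ψH - ψ₀) * s / H)
    (c c' : ℝ → ℝ)
    (hc : ∀ s ∈ Set.Icc (0 : ℝ) H, HasDerivAt c (c' s) s)
    (hflux : ∀ s ∈ Set.Icc (0 : ℝ) H,
      -D * (c' s + c s * deriv ψ s) = J) :
    J = (D / H) * (Be (ψH - ψ₀) * c 0 - Be (-(ψH - ψ₀)) * c H) := by
  set x := ψH - ψ₀
  have hψ_eq : ψ = fun t => ψ₀ + x / H * t := funext fun t => by rw [hψ]; ring
  have hode : ∀ s ∈ Icc 0 H, c' s + x / H * c s = -(J / D) := fun s hs => by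
    rw [← hflux s hs, hψ_eq, deriv_const_add, deriv_const_mul_field', deriv_id'']
    field_simp
  have hint := mul_exp_sub_mul_exp_of_deriv_add_mul_eq hH.le hc hode
  rw [mul_zero, exp_zero, mul_one, div_mul_cancel₀ x hH.ne'] at hint
  have hsum : Be x * c 0 - Be x * exp x * c H = J / D * H := by
    linear_combination (-Be x) * hint + J / D * Be_mul_integral_exp x hH.ne'
  rw [Be_neg, hsum]
  field_simp
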